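/- Let L > 0, let λ be the normalized Lebesgue measure on [0,L], and let μ be the probability measure on [0,π] with μ(B) = (1/2)∫_B sin(θ) dθ. Then λ × μ is invariant for the random map T̄(s,θ) = (s, T_i(θ)) applied with probability p_i(θ): for every Borel set E ⊆ [0,L] × [0,π], (λ×μ)(E) = Σ_{i=1}^4 ∬ 1_E(s, T_i(θ)) p_i(θ) dλ(s) dμ(θ). -/

import Mathlib

open Real MeasureTheory Set Filter Topology
open scoped ENNReal NNReal

noncomputable section

namespace RandomBilliard

/-- The four maps `T_1, …, T_4` of the Feres random map
(index `i : Fin 4` stands for `T_{i+1}`). -/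
def T (α : ℝ) : Fin 4 → ℝ → ℝ
  | 0 => fun θ => θ + 2 * α
  | 1 => fun θ => -θ + 2 * π - 4 * α
  | 2 => fun θ => θ - 2 * α
  | 3 => fun θ => -θ + 4 * α

/-- `u_a(θ) = (1/2)(1 + tan a / tan θ)`. -/
def u (a θ : ℝ) : ℝ := 1 / 2 * (1 + Real.tan a / Real.tan θ)

/-- The probabilities `p_1, …, p_4` of the Feres random map
(index `i : Fin 4` stands for `p_{i+1}`). -/
def p (α : ℝ) : Fin 4 → ℝ → ℝ
  | 0 => fun θ =>
      if θ < α then 1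
      else if θ < π - 3 * α then u α θ
      else if θ < π - 2 * α then 2 * Real.cos (2 * α) * u (2 * α) θ
      else 0
  | 1 => fun θ =>
      if θ < π - 3 * α then 0
      else if θ < π - 2 * α then u α θ - 2 * Real.cos (2 * α) * u (2 * α) θ
      else if θ < π - α then u α θ
      else 0
  | 2 => fun θ =>
      if θ < 2 * α then 0
      else if θ < 3 * α then 2 * Real.cos (2 * α) * u (2 * α) (-θ)
      else if θ < π - α then u α (-θ)
      else 1
  | 3 => fun θ =>
      if θ < α then 0
      else if θ < 2 * α then u α (-θ)
      else if θ < 3 * α then u α (-θ) - 2 * Real.cos (2 * α) * u (2 * α) (-θ)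
      else 0

/-- `iterT α x k θ = T_x^{(k)}(θ) = T_{x_k} ∘ ⋯ ∘ T_{x_1}(θ)`
(the term `x j : Fin 4` stands for the symbol `x_{j+1}`). -/
def iterT (α : ℝ) (x : ℕ → Fin 4) : ℕ → ℝ → ℝ
  | 0 => fun θ => θ
  | k + 1 => fun θ => T α (x k) (iterT α x k θ)

/-- `Σ_θ`: the admissible symbol sequences for `θ`, i.e. those whose every finite
prefix has positive probability. -/
def SigmaTheta (α θ : ℝ) : Set (ℕ → Fin 4) :=
  {x | ∀ k : ℕ, 0 < ∏ j ∈ Finset.range k, p α (x j) (iterT α x j θ)}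

/-- `C(θ)`: all possible future images of `θ` under the Feres random map. -/
def Cset (α θ : ℝ) : Set ℝ :=
  {θ' | θ' ∈ Set.Ioo 0 π ∧
    ∃ (x : ℕ → Fin 4) (k : ℕ), x ∈ SigmaTheta α θ ∧ iterT α x k θ = θ'}

/-- The probability measure `μ(A) = (1/2) ∫_A sin θ dθ` on `[0, π]`. -/
def mu0 : Measure ℝ :=
  (volume.restrict (Set.Icc 0 π)).withDensity fun θ => ENNReal.ofReal (1 / 2 * Real.sin θ)

/-- One step of the evolution of a measure under the Feres random map:
`(stepMeasure α ν)(A) = ∫ K(θ, A) dν(θ)`, where `K(θ, A) = Σ_i p_i(θ) 1_A(T_i θ)`. -/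
def stepMeasure (α : ℝ) (ν : Measure ℝ) : Measure ℝ :=
  ∑ i : Fin 4, Measure.map (T α i) (ν.withDensity fun θ => ENNReal.ofReal (p α i θ))

/-- One step of the evolution of a measure under the random billiard map in the circle
`F̄(s, θ) = (s + 2 T_i(θ) mod 2π, T_i(θ))` with probability `p_i(θ)`. -/
def circleStep (α : ℝ) (ν : Measure (ℝ × ℝ)) : Measure (ℝ × ℝ) :=
  ∑ i : Fin 4,
    Measure.map
      (fun q : ℝ × ℝ => (toIcoMod Real.two_pi_pos 0 (q.1 + 2 * T α i q.2), T α i q.2))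
      (ν.withDensity fun q => ENNReal.ofReal (p α i q.2))

/-- The transition kernel `K(θ', ·) = Σ_i p_i(θ') δ_{T_i(θ')}` of the Feres random map. -/
def feresKernel (α : ℝ) (t : ℝ) : Measure ℝ :=
  ∑ i : Fin 4, ENNReal.ofReal (p α i t) • Measure.dirac (T α i t)

/-- `k`-step iterates of a transition kernel. -/
def kerIterate (κ : ℝ → Measure ℝ) : ℕ → ℝ → Measure ℝ
  | 0 => fun t => Measure.dirac t
  | k + 1 => fun t => (κ t).bind (kerIterate κ k)

/-- The probability that a Markov chain with kernel `κ` started at `t` satisfies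
`θ_0 ∈ B 0, …, θ_n ∈ B n`. -/
def cylProb (κ : ℝ → Measure ℝ) : ℕ → (ℕ → Set ℝ) → ℝ → ℝ≥0∞
  | 0 => fun B t => Set.indicator (B 0) (fun _ => (1 : ℝ≥0∞)) t
  | n + 1 => fun B t =>
      Set.indicator (B 0)
        (fun _ => ∫⁻ t', cylProb κ n (fun k => B (k + 1)) t' ∂(κ t)) t

/-- `ν` is the Markov path measure on `ℕ → ℝ` (given by the Ionescu–Tulcea construction)
with initial distribution `ρ` and transition kernel `κ`, characterized by its values
on cylinder sets. -/
def IsMarkovPathMeasure (κ : ℝ → Measure ℝ) (ρ : Measure ℝ) (ν : Measure (ℕ → ℝ)) : Prop :=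
  ∀ (n : ℕ) (B : ℕ → Set ℝ), (∀ k, MeasurableSet (B k)) →
    ν {ω | ∀ k ≤ n, ω k ∈ B k} = ∫⁻ t, cylProb κ n B t ∂ρ

/-- The shift map on sequences. -/
def shift : (ℕ → ℝ) → ℕ → ℝ := fun ω n => ω (n + 1)

/-- Aperiodicity of the Markov chain with kernel `κ` on the state space `S`:
for every state, every common divisor of the return times having positive
probability equals `1` (i.e. every state has period 1). -/
def AperiodicChain (κ : ℝ → Measure ℝ) (S : Set ℝ) : Prop :=
  ∀ t ∈ S, ∀ d : ℕ, (∀ k : ℕ, 1 ≤ k → 0 < kerIterate κ k t {t} → d ∣ k) → d = 1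

end RandomBilliard

open RandomBilliard

/-!
By Fubini, `(λ × μ)(E) = ∫ λ(E^θ) dμ(θ)`, so the claim is the stationarity of `μ`:
`∑ᵢ ∫ F(Tᵢ θ) pᵢ(θ) dμ(θ) = ∫ F dμ` for measurable `F ≥ 0`. Every `Tᵢ` is an isometry of `ℝ`,
hence preserves Lebesgue measure, and the `i`-th term becomes `∫ F(x) ρᵢ(x) / 2 dx` with
`ρᵢ(x) = pᵢ(θ) sin θ` at `θ = Tᵢ⁻¹ x ∈ [0, π]`. Since `u_a(θ) sin θ = sin(θ + a) / (2 cos a)`,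
on each of the seven intervals into which `α, 2α, 3α, π - 3α, π - 2α, π - α` cut `(0, π)`
every `ρᵢ` is an explicit sine, and `∑ᵢ ρᵢ(x) = sin x` follows from
`2 sin y cos α = sin(y - α) + sin(y + α)`.
-/

namespace RandomBilliard

section Trigonometry

variable {a θ : ℝ}

lemma sin_add_div_add_sin_sub_div (ha : cos a ≠ 0) (x : ℝ) :
    sin (x + a) / (2 * cos a) + sin (x - a) / (2 * cos a) = sin x := by
  field_simp
  linear_combination (norm := ring_nf) -two_mul_sin_mul_cos x a

/-- Lean's `tan` vanishes where `cos` does, so this needs no hypothesis on `cos θ`. -/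
lemma u_mul_sin (ha : cos a ≠ 0) (hθ : sin θ ≠ 0) :
    u a θ * sin θ = sin (θ + a) / (2 * cos a) := by
  rw [u, tan_eq_sin_div_cos, tan_eq_sin_div_cos, sin_add, div_div_eq_mul_div]
  field_simp

lemma u_neg_mul_sin (ha : cos a ≠ 0) (hθ : sin θ ≠ 0) :
    u a (-θ) * sin θ = sin (θ - a) / (2 * cos a) := by
  rw [u, tan_neg, tan_eq_sin_div_cos, tan_eq_sin_div_cos, sin_sub, div_neg,
    div_div_eq_mul_div]
  field_simp
  ring

lemma two_cos_mul_u_mul_sin (ha : cos a ≠ 0) (hθ : sin θ ≠ 0) :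
    2 * cos a * u a θ * sin θ = sin (θ + a) := by
  rw [mul_assoc, u_mul_sin ha hθ]
  field_simp

lemma two_cos_mul_u_neg_mul_sin (ha : cos a ≠ 0) (hθ : sin θ ≠ 0) :
    2 * cos a * u a (-θ) * sin θ = sin (θ - a) := by
  rw [mul_assoc, u_neg_mul_sin ha hθ]
  field_simp

lemma u_sub_two_cos_mul_u_mul_sin (ha : cos a ≠ 0) (ha' : cos (2 * a) ≠ 0) (hθ : sin θ ≠ 0) :
    (u a θ - 2 * cos (2 * a) * u (2 * a) θ) * sin θ = -sin (θ + 3 * a) / (2 * cos a) := by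
  rw [sub_mul, u_mul_sin ha hθ, two_cos_mul_u_mul_sin ha' hθ]
  field_simp
  linear_combination (norm := ring_nf) -two_mul_sin_mul_cos (θ + 2 * a) a

lemma u_neg_sub_two_cos_mul_u_neg_mul_sin (ha : cos a ≠ 0) (ha' : cos (2 * a) ≠ 0)
    (hθ : sin θ ≠ 0) :
    (u a (-θ) - 2 * cos (2 * a) * u (2 * a) (-θ)) * sin θ = sin (3 * a - θ) / (2 * cos a) := by
  rw [sub_mul, u_neg_mul_sin ha hθ, two_cos_mul_u_neg_mul_sin ha' hθ]
  field_simp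
  linear_combination (norm := ring_nf)
    -two_mul_sin_mul_cos (θ - 2 * a) a - sin_neg (θ - 3 * a)

end Trigonometry

lemma cos_pos_of_mem_Ioo_zero_pi_div_six {α : ℝ} (hα : α ∈ Ioo 0 (π / 6)) : 0 < cos α :=
  cos_pos_of_mem_Ioo ⟨by linarith [hα.1, pi_pos], by linarith [hα.2, pi_pos]⟩

lemma cos_two_mul_pos_of_mem_Ioo_zero_pi_div_six {α : ℝ} (hα : α ∈ Ioo 0 (π / 6)) :
    0 < cos (2 * α) :=
  cos_pos_of_mem_Ioo ⟨by linarith [hα.1, pi_pos], by linarith [hα.2, pi_pos]⟩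

def Tinv (α : ℝ) : Fin 4 → ℝ → ℝ
  | 0 => fun x => x - 2 * α
  | 1 => fun x => 2 * π - 4 * α - x
  | 2 => fun x => x + 2 * α
  | 3 => fun x => 4 * α - x

lemma T_Tinv (α : ℝ) (i : Fin 4) (x : ℝ) : T α i (Tinv α i x) = x := by
  fin_cases i <;> simp only [T, Tinv] <;> ring

lemma measurable_T (α : ℝ) (i : Fin 4) : Measurable (T α i) := by
  fin_cases i <;> simp only [T] <;> fun_prop

lemma measurePreserving_Tinv (α : ℝ) (i : Fin 4) : MeasurePreserving (Tinv α i) := by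
  fin_cases i
  · exact measurePreserving_sub_right volume _
  · exact Measure.measurePreserving_sub_left volume _
  · exact measurePreserving_add_right volume _
  · exact Measure.measurePreserving_sub_left volume _

lemma measurable_p (α : ℝ) (i : Fin 4) : Measurable (p α i) := by
  have htan : Measurable tan := by
    rw [show tan = fun x => sin x / cos x from funext tan_eq_sin_div_cos]
    fun_prop
  have hu : ∀ a, Measurable (u a) := fun a => by unfold u; fun_prop
  fin_cases i <;> simp only [p] <;>
    refine Measurable.ite measurableSet_Iio ?_
      (Measurable.ite measurableSet_Iio ?_ (Measurable.ite measurableSet_Iio ?_ ?_)) <;> fun_prop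

lemma p_nonneg {α θ : ℝ} (hα : α ∈ Ioo 0 (π / 6)) (hθ : θ ∈ Icc 0 π) (i : Fin 4) :
    0 ≤ p α i θ := by
  have hc := cos_pos_of_mem_Ioo_zero_pi_div_six hα
  have hc2 := cos_two_mul_pos_of_mem_Ioo_zero_pi_div_six hα
  obtain ⟨h0, h6⟩ := hα
  obtain ⟨hθ0, hθπ⟩ := hθ
  have hsin : ∀ y, 0 ≤ y → y ≤ π → 0 ≤ sin y := fun y => sin_nonneg_of_nonneg_of_le_pi
  fin_cases i <;> simp only [p] <;> split_ifs <;> try positivity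
  -- On each remaining piece, `p θ * sin θ` is the sine of a point of `[0, π]`,
  -- possibly divided by `2 * cos α`.
  all_goals
    have hs : 0 < sin θ := sin_pos_of_pos_of_lt_pi (by linarith) (by linarith)
    refine nonneg_of_mul_nonneg_left ?_ hs
    first
      | rw [u_sub_two_cos_mul_u_mul_sin hc.ne' hc2.ne' hs.ne', ← sin_sub_pi]
      | rw [u_neg_sub_two_cos_mul_u_neg_mul_sin hc.ne' hc2.ne' hs.ne']
      | rw [two_cos_mul_u_mul_sin hc2.ne' hs.ne']
      | rw [two_cos_mul_u_neg_mul_sin hc2.ne' hs.ne']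
      | rw [u_mul_sin hc.ne' hs.ne']
      | rw [u_neg_mul_sin hc.ne' hs.ne']
    first
      | exact div_nonneg (hsin _ (by linarith) (by linarith)) (by positivity)
      | exact hsin _ (by linarith) (by linarith)

lemma T_mem_Icc_of_p_ne_zero {α θ : ℝ} (hα : α ∈ Ioo 0 (π / 6)) (hθ : θ ∈ Icc 0 π)
    {i : Fin 4} (hp : p α i θ ≠ 0) : T α i θ ∈ Icc 0 π := by
  obtain ⟨h0, h6⟩ := hα
  obtain ⟨hθ0, hθπ⟩ := hθ
  fin_cases i <;> simp only [p, T] at hp ⊢ <;> split_ifs at hp <;>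
    first | exact absurd rfl hp | exact ⟨by linarith, by linarith⟩

def mu0Density : ℝ → ℝ≥0∞ := (Icc 0 π).indicator fun θ => ENNReal.ofReal (1 / 2 * sin θ)

lemma measurable_mu0Density : Measurable mu0Density :=
  (by fun_prop : Measurable fun θ => ENNReal.ofReal (1 / 2 * sin θ)).indicator measurableSet_Icc

lemma mu0_eq_withDensity : mu0 = volume.withDensity mu0Density :=
  (withDensity_indicator measurableSet_Icc _).symm

instance sFinite_mu0 : SFinite mu0 := by
  rw [mu0_eq_withDensity]
  infer_instance

/-- `branchDensity α i / 2` is the Lebesgue density of the image of `p α i • mu0` under `T α i`. -/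
def branchDensity (α : ℝ) (i : Fin 4) (x : ℝ) : ℝ :=
  (Icc 0 π).indicator (fun θ => p α i θ * sin θ) (Tinv α i x)

lemma measurable_branchDensity (α : ℝ) (i : Fin 4) : Measurable (branchDensity α i) :=
  (((measurable_p α i).mul measurable_sin).indicator measurableSet_Icc).comp
    (measurePreserving_Tinv α i).measurable

lemma branchDensity_nonneg {α : ℝ} (hα : α ∈ Ioo 0 (π / 6)) (i : Fin 4) (x : ℝ) :
    0 ≤ branchDensity α i x :=
  indicator_nonneg (fun _ hθ => mul_nonneg (p_nonneg hα hθ i)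
    (sin_nonneg_of_nonneg_of_le_pi hθ.1 hθ.2)) _

lemma branchDensity_of_notMem_Icc {α x : ℝ} (hα : α ∈ Ioo 0 (π / 6)) (hx : x ∉ Icc 0 π)
    (i : Fin 4) : branchDensity α i x = 0 := by
  refine indicator_apply_eq_zero.mpr fun hθ => ?_
  by_contra hne
  exact hx (T_Tinv α i x ▸ T_mem_Icc_of_p_ne_zero hα hθ (left_ne_zero_of_mul hne))

section BranchDensityValues

variable {α x : ℝ}

lemma branchDensity_of_Tinv_notMem {i : Fin 4} (h : Tinv α i x ∉ Icc 0 π) :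
    branchDensity α i x = 0 :=
  indicator_of_notMem h _

lemma branchDensity_of_p_Tinv_eq_zero {i : Fin 4} (h : p α i (Tinv α i x) = 0) :
    branchDensity α i x = 0 := by
  simp [branchDensity, h]

lemma branchDensity_zero_eq_zero_of_lt (hx : x < 2 * α) : branchDensity α 0 x = 0 :=
  branchDensity_of_Tinv_notMem fun h => by simp only [Tinv] at h; linarith [h.1]

lemma branchDensity_zero_eq_sin_sub (hα : α ∈ Ioo 0 (π / 6)) (h1 : 2 * α < x)
    (h2 : x < 3 * α) : branchDensity α 0 x = sin (x - 2 * α) := by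
  obtain ⟨h0, h6⟩ := hα
  simp only [branchDensity, Tinv, p, indicator_apply, mem_Icc]
  rw [if_pos ⟨by linarith, by linarith⟩, if_pos (by linarith), one_mul]

lemma branchDensity_zero_eq_sin_sub_div (hα : α ∈ Ioo 0 (π / 6)) (h1 : 3 * α < x)
    (h2 : x < π - α) : branchDensity α 0 x = sin (x - α) / (2 * cos α) := by
  have hc := cos_pos_of_mem_Ioo_zero_pi_div_six hα
  obtain ⟨h0, h6⟩ := hα
  simp only [branchDensity, Tinv, p, indicator_apply, mem_Icc]
  rw [if_pos ⟨by linarith, by linarith⟩, if_neg (by linarith), if_pos (by linarith),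
    u_mul_sin hc.ne' (sin_pos_of_pos_of_lt_pi (by linarith) (by linarith)).ne']
  ring_nf

lemma branchDensity_zero_eq_sin (hα : α ∈ Ioo 0 (π / 6)) (h1 : π - α < x) (h2 : x < π) :
    branchDensity α 0 x = sin x := by
  have hc2 := cos_two_mul_pos_of_mem_Ioo_zero_pi_div_six hα
  obtain ⟨h0, h6⟩ := hα
  simp only [branchDensity, Tinv, p, indicator_apply, mem_Icc]
  rw [if_pos ⟨by linarith, by linarith⟩, if_neg (by linarith), if_neg (by linarith),
    if_pos (by linarith),
    two_cos_mul_u_mul_sin hc2.ne' (sin_pos_of_pos_of_lt_pi (by linarith) (by linarith)).ne']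
  ring_nf

lemma branchDensity_one_eq_zero_of_lt (h0 : 0 < α) (hx : x < π - 3 * α) :
    branchDensity α 1 x = 0 := by
  apply branchDensity_of_p_Tinv_eq_zero
  show p α 1 (2 * π - 4 * α - x) = 0
  simp only [p]
  rw [if_neg (by linarith), if_neg (by linarith), if_neg (by linarith)]

lemma branchDensity_one_eq_zero_of_gt (hx : π - α < x) : branchDensity α 1 x = 0 := by
  apply branchDensity_of_p_Tinv_eq_zero
  show p α 1 (2 * π - 4 * α - x) = 0
  simp only [p]
  rw [if_pos (by linarith)]

lemma branchDensity_one_eq_neg_sin_div (hα : α ∈ Ioo 0 (π / 6)) (h1 : π - 3 * α < x)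
    (h2 : x < π - 2 * α) : branchDensity α 1 x = -sin (x + 3 * α) / (2 * cos α) := by
  have hc := cos_pos_of_mem_Ioo_zero_pi_div_six hα
  obtain ⟨h0, h6⟩ := hα
  simp only [branchDensity, Tinv, p, indicator_apply, mem_Icc]
  rw [if_pos ⟨by linarith, by linarith⟩, if_neg (by linarith), if_neg (by linarith),
    if_pos (by linarith),
    u_mul_sin hc.ne' (sin_pos_of_pos_of_lt_pi (by linarith) (by linarith)).ne',
    show 2 * π - 4 * α - x + α = -(x + 3 * α) + 2 * π by ring, sin_add_two_pi, sin_neg]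

lemma branchDensity_one_eq_sin_add_div (hα : α ∈ Ioo 0 (π / 6)) (h1 : π - 2 * α < x)
    (h2 : x < π - α) : branchDensity α 1 x = sin (x + α) / (2 * cos α) := by
  have hc := cos_pos_of_mem_Ioo_zero_pi_div_six hα
  have hc2 := cos_two_mul_pos_of_mem_Ioo_zero_pi_div_six hα
  obtain ⟨h0, h6⟩ := hα
  simp only [branchDensity, Tinv, p, indicator_apply, mem_Icc]
  rw [if_pos ⟨by linarith, by linarith⟩, if_neg (by linarith), if_pos (by linarith),
    u_sub_two_cos_mul_u_mul_sin hc.ne' hc2.ne'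
      (sin_pos_of_pos_of_lt_pi (by linarith) (by linarith)).ne',
    show 2 * π - 4 * α - x + 3 * α = -(x + α) + 2 * π by ring, sin_add_two_pi, sin_neg,
    neg_neg]

lemma branchDensity_two_eq_sin (hα : α ∈ Ioo 0 (π / 6)) (h1 : 0 < x) (h2 : x < α) :
    branchDensity α 2 x = sin x := by
  have hc2 := cos_two_mul_pos_of_mem_Ioo_zero_pi_div_six hα
  obtain ⟨h0, h6⟩ := hα
  simp only [branchDensity, Tinv, p, indicator_apply, mem_Icc]
  rw [if_pos ⟨by linarith, by linarith⟩, if_neg (by linarith), if_pos (by linarith),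
    two_cos_mul_u_neg_mul_sin hc2.ne'
      (sin_pos_of_pos_of_lt_pi (by linarith) (by linarith)).ne']
  ring_nf

lemma branchDensity_two_eq_sin_add_div (hα : α ∈ Ioo 0 (π / 6)) (h1 : α < x)
    (h2 : x < π - 3 * α) : branchDensity α 2 x = sin (x + α) / (2 * cos α) := by
  have hc := cos_pos_of_mem_Ioo_zero_pi_div_six hα
  obtain ⟨h0, h6⟩ := hα
  simp only [branchDensity, Tinv, p, indicator_apply, mem_Icc]
  rw [if_pos ⟨by linarith, by linarith⟩, if_neg (by linarith), if_neg (by linarith),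
    if_pos (by linarith),
    u_neg_mul_sin hc.ne' (sin_pos_of_pos_of_lt_pi (by linarith) (by linarith)).ne']
  ring_nf

lemma branchDensity_two_eq_sin_add (hα : α ∈ Ioo 0 (π / 6)) (h1 : π - 3 * α < x)
    (h2 : x < π - 2 * α) : branchDensity α 2 x = sin (x + 2 * α) := by
  obtain ⟨h0, h6⟩ := hα
  simp only [branchDensity, Tinv, p, indicator_apply, mem_Icc]
  rw [if_pos ⟨by linarith, by linarith⟩, if_neg (by linarith), if_neg (by linarith),
    if_neg (by linarith), one_mul]

lemma branchDensity_two_eq_zero_of_gt (hx : π - 2 * α < x) : branchDensity α 2 x = 0 :=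
  branchDensity_of_Tinv_notMem fun h => by simp only [Tinv] at h; linarith [h.2]

lemma branchDensity_three_eq_zero_of_lt (h0 : 0 < α) (hx : x < α) :
    branchDensity α 3 x = 0 := by
  apply branchDensity_of_p_Tinv_eq_zero
  show p α 3 (4 * α - x) = 0
  simp only [p]
  rw [if_neg (by linarith), if_neg (by linarith), if_neg (by linarith)]

lemma branchDensity_three_eq_zero_of_gt (hx : 3 * α < x) : branchDensity α 3 x = 0 := by
  apply branchDensity_of_p_Tinv_eq_zero
  show p α 3 (4 * α - x) = 0
  simp only [p]
  rw [if_pos (by linarith)]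

lemma branchDensity_three_eq_sin_sub_div (hα : α ∈ Ioo 0 (π / 6)) (h1 : α < x)
    (h2 : x < 2 * α) : branchDensity α 3 x = sin (x - α) / (2 * cos α) := by
  have hc := cos_pos_of_mem_Ioo_zero_pi_div_six hα
  have hc2 := cos_two_mul_pos_of_mem_Ioo_zero_pi_div_six hα
  obtain ⟨h0, h6⟩ := hα
  simp only [branchDensity, Tinv, p, indicator_apply, mem_Icc]
  rw [if_pos ⟨by linarith, by linarith⟩, if_neg (by linarith), if_neg (by linarith),
    if_pos (by linarith), u_neg_sub_two_cos_mul_u_neg_mul_sin hc.ne' hc2.ne'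
      (sin_pos_of_pos_of_lt_pi (by linarith) (by linarith)).ne',
    show 3 * α - (4 * α - x) = x - α by ring]

lemma branchDensity_three_eq_sin_three_mul_sub_div (hα : α ∈ Ioo 0 (π / 6))
    (h1 : 2 * α < x) (h2 : x < 3 * α) :
    branchDensity α 3 x = sin (3 * α - x) / (2 * cos α) := by
  have hc := cos_pos_of_mem_Ioo_zero_pi_div_six hα
  obtain ⟨h0, h6⟩ := hα
  simp only [branchDensity, Tinv, p, indicator_apply, mem_Icc]
  rw [if_pos ⟨by linarith, by linarith⟩, if_neg (by linarith), if_pos (by linarith),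
    u_neg_mul_sin hc.ne' (sin_pos_of_pos_of_lt_pi (by linarith) (by linarith)).ne']
  ring_nf

end BranchDensityValues

lemma sum_branchDensity {α x : ℝ} (hα : α ∈ Ioo 0 (π / 6)) (hx : x ∈ Ioo 0 π)
    (hx' : x ∉ ({α, 2 * α, 3 * α, π - 3 * α, π - 2 * α, π - α} : Set ℝ)) :
    ∑ i, branchDensity α i x = sin x := by
  have hc := (cos_pos_of_mem_Ioo_zero_pi_div_six hα).ne'
  have key := sin_add_div_add_sin_sub_div hc x
  have ⟨h0, h6⟩ := hα
  obtain ⟨hx0, hxπ⟩ := hx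
  simp only [mem_insert_iff, mem_singleton_iff, not_or] at hx'
  obtain ⟨e1, e2, e3, e4, e5, e6⟩ := hx'
  rw [Fin.sum_univ_four]
  rcases lt_or_gt_of_ne e1 with r1 | r1
  · rw [branchDensity_zero_eq_zero_of_lt (by linarith), branchDensity_one_eq_zero_of_lt h0
      (by linarith), branchDensity_two_eq_sin hα hx0 r1, branchDensity_three_eq_zero_of_lt h0 r1]
    ring
  rcases lt_or_gt_of_ne e2 with r2 | r2
  · rw [branchDensity_zero_eq_zero_of_lt r2, branchDensity_one_eq_zero_of_lt h0 (by linarith),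
      branchDensity_two_eq_sin_add_div hα r1 (by linarith),
      branchDensity_three_eq_sin_sub_div hα r1 r2]
    linear_combination key
  rcases lt_or_gt_of_ne e3 with r3 | r3
  · rw [branchDensity_zero_eq_sin_sub hα r2 r3, branchDensity_one_eq_zero_of_lt h0 (by linarith),
      branchDensity_two_eq_sin_add_div hα (by linarith) (by linarith),
      branchDensity_three_eq_sin_three_mul_sub_div hα r2 r3]
    field_simp
    linear_combination (norm := ring_nf)
      two_mul_sin_mul_cos (x - 2 * α) α - two_mul_sin_mul_cos x α + sin_neg (x - 3 * α)
  rcases lt_or_gt_of_ne e4 with r4 | r4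
  · rw [branchDensity_zero_eq_sin_sub_div hα r3 (by linarith),
      branchDensity_one_eq_zero_of_lt h0 r4, branchDensity_two_eq_sin_add_div hα (by linarith) r4,
      branchDensity_three_eq_zero_of_gt r3]
    linear_combination key
  rcases lt_or_gt_of_ne e5 with r5 | r5
  · rw [branchDensity_zero_eq_sin_sub_div hα (by linarith) (by linarith),
      branchDensity_one_eq_neg_sin_div hα r4 r5, branchDensity_two_eq_sin_add hα r4 r5,
      branchDensity_three_eq_zero_of_gt (by linarith)]
    field_simp
    linear_combination (norm := ring_nf)
      two_mul_sin_mul_cos (x + 2 * α) α - two_mul_sin_mul_cos x α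
  rcases lt_or_gt_of_ne e6 with r6 | r6
  · rw [branchDensity_zero_eq_sin_sub_div hα (by linarith) r6,
      branchDensity_one_eq_sin_add_div hα r5 r6, branchDensity_two_eq_zero_of_gt r5,
      branchDensity_three_eq_zero_of_gt (by linarith)]
    linear_combination key
  · rw [branchDensity_zero_eq_sin hα r6 hxπ, branchDensity_one_eq_zero_of_gt r6,
      branchDensity_two_eq_zero_of_gt (by linarith),
      branchDensity_three_eq_zero_of_gt (by linarith)]
    ring

lemma ae_sum_ofReal_branchDensity {α : ℝ} (hα : α ∈ Ioo 0 (π / 6)) :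
    ∀ᵐ x, ∑ i, ENNReal.ofReal (branchDensity α i x / 2) = mu0Density x := by
  have hnull : volume (insert 0 (insert π
      ({α, 2 * α, 3 * α, π - 3 * α, π - 2 * α, π - α} : Set ℝ))) = 0 :=
    (toFinite _).measure_zero _
  filter_upwards [measure_eq_zero_iff_ae_notMem.mp hnull] with x hx
  rw [mem_insert_iff, mem_insert_iff, not_or, not_or] at hx
  obtain ⟨hx0, hxπ, hx'⟩ := hx
  rw [← ENNReal.ofReal_sum_of_nonneg fun i _ =>
      div_nonneg (branchDensity_nonneg hα i x) two_pos.le, ← Finset.sum_div, mu0Density]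
  by_cases hIcc : x ∈ Icc 0 π
  · rw [indicator_of_mem hIcc, sum_branchDensity hα
      ⟨lt_of_le_of_ne hIcc.1 (Ne.symm hx0), lt_of_le_of_ne hIcc.2 hxπ⟩ hx', div_eq_inv_mul,
      one_div]
  · simp [indicator_of_notMem hIcc, branchDensity_of_notMem_Icc hα hIcc]

lemma lintegral_comp_T_mul_ofReal_p (α : ℝ) (i : Fin 4) {F : ℝ → ℝ≥0∞} (hF : Measurable F) :
    ∫⁻ θ, F (T α i θ) * ENNReal.ofReal (p α i θ) ∂mu0 =
      ∫⁻ x, F x * ENNReal.ofReal (branchDensity α i x / 2) := by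
  have hg : Measurable fun θ => F (T α i θ) * ENNReal.ofReal (p α i θ) :=
    (hF.comp (measurable_T α i)).mul (measurable_p α i).ennreal_ofReal
  rw [mu0_eq_withDensity, lintegral_withDensity_eq_lintegral_mul _ measurable_mu0Density hg,
    ← (measurePreserving_Tinv α i).lintegral_comp (measurable_mu0Density.mul hg)]
  refine lintegral_congr fun x => ?_
  simp only [Pi.mul_apply, T_Tinv, mu0Density, branchDensity, indicator_apply]
  split_ifs with hθ
  · rw [mul_left_comm,
      ← ENNReal.ofReal_mul (by linarith [sin_nonneg_of_nonneg_of_le_pi hθ.1 hθ.2])]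
    ring_nf
  · simp

theorem sum_lintegral_comp_T_mul_ofReal_p {α : ℝ} (hα : α ∈ Ioo 0 (π / 6)) {F : ℝ → ℝ≥0∞}
    (hF : Measurable F) :
    ∑ i, ∫⁻ θ, F (T α i θ) * ENNReal.ofReal (p α i θ) ∂mu0 = ∫⁻ y, F y ∂mu0 := by
  calc ∑ i, ∫⁻ θ, F (T α i θ) * ENNReal.ofReal (p α i θ) ∂mu0
      = ∫⁻ x, F x * ∑ i, ENNReal.ofReal (branchDensity α i x / 2) := by
        simp only [lintegral_comp_T_mul_ofReal_p α _ hF, Finset.mul_sum]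
        exact (lintegral_finsetSum _ fun i _ =>
          hF.mul ((measurable_branchDensity α i).div_const 2).ennreal_ofReal).symm
    _ = ∫⁻ x, mu0Density x * F x := by
        refine lintegral_congr_ae ?_
        filter_upwards [ae_sum_ofReal_branchDensity hα] with x hx
        rw [hx, mul_comm]
    _ = ∫⁻ y, F y ∂mu0 := by
        rw [mu0_eq_withDensity,
          lintegral_withDensity_eq_lintegral_mul _ measurable_mu0Density hF]
        rfl

end RandomBilliard

theorem prod_measure_invariant_for_Tbar_general (α : ℝ) (hα : α ∈ Set.Ioo 0 (π / 6))
    (L : ℝ) (lam : Measure ℝ)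
    (hlam : lam = (ENNReal.ofReal L)⁻¹ • volume.restrict (Set.Icc 0 L))
    (E : Set (ℝ × ℝ)) (hE : MeasurableSet E) :
    (lam.prod mu0) E =
      ∑ i : Fin 4, ∫⁻ θ, (∫⁻ s,
        Set.indicator E (fun _ => (1 : ℝ≥0∞)) (s, T α i θ) * ENNReal.ofReal (p α i θ)
          ∂lam) ∂mu0 := by
  subst hlam
  rw [Measure.prod_apply_symm hE,
    ← sum_lintegral_comp_T_mul_ofReal_p hα (measurable_measure_prodMk_right hE)]
  refine Finset.sum_congr rfl fun i _ => lintegral_congr fun θ => ?_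
  rw [lintegral_mul_const' _ _ ENNReal.ofReal_ne_top,
    ← lintegral_indicator_one (measurable_prodMk_right hE)]
  rfl

/-- the measure `λ × μ` (normalized Lebesgue on `[0, L]` times
`μ(B) = (1/2)∫_B sin θ dθ`) is invariant for the random map `T̄(s, θ) = (s, T_i(θ))`
with probability `p_i(θ)`. -/
theorem prod_measure_invariant_for_Tbar (α : ℝ) (hα : α ∈ Set.Ioo 0 (π / 6))
    (L : ℝ) (hL : 0 < L) (lam : Measure ℝ)
    (hlam : lam = (ENNReal.ofReal L)⁻¹ • volume.restrict (Set.Icc 0 L))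
    (E : Set (ℝ × ℝ)) (hE : MeasurableSet E)
    (hEsub : E ⊆ Set.Icc 0 L ×ˢ Set.Icc 0 π) :
    (lam.prod mu0) E =
      ∑ i : Fin 4, ∫⁻ θ, (∫⁻ s,
        Set.indicator E (fun _ => (1 : ℝ≥0∞)) (s, T α i θ) * ENNReal.ofReal (p α i θ)
          ∂lam) ∂mu0 :=
  prod_measure_invariant_for_Tbar_general α hα L lam hlam E hE
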